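/- If a moded clause c : A ← A₁ ← ⋯ ← A_m is mode consistent and a goal matching its head A has all input arguments ground, then executing the clause left-to-right preserves groundness: for each i, the input arguments of Aᵢ are ground relative to the variables grounded so far, and after all premises succeed with ground outputs, the output arguments of A are ground. -/

import Mathlib

/-- First-order terms (a simplified instance of LF objects/types). -/
inductive Tm : Type where
  | var : Nat → Tm
  | const : Nat → Tm
  | app : Tm → Tm → Tm
deriving DecidableEq

/-- Substitutions as finite lists of bindings. -/
abbrev Subst := List (Nat × Tm)

def lookupS (σ : Subst) (x : Nat) : Tm :=
  match σ with
  | [] => Tm.var x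
  | (y, M) :: σ' => if x = y then M else lookupS σ' x

def applyS (σ : Subst) : Tm → Tm
  | Tm.var x => lookupS σ x
  | Tm.const c => Tm.const c
  | Tm.app t u => Tm.app (applyS σ t) (applyS σ u)

/-- Contexts assign types (terms) to variables. -/
abbrev Ctx := List (Nat × Tm)

/-- Composition of substitutions: ∅ ∘ θ = ∅, (σ, M/x) ∘ θ = (σ ∘ θ, M[θ]/x). -/
def compS (σ θ : Subst) : Subst := σ.map (fun p => (p.1, applyS θ p.2))

/-- Γ[σ]. -/
def ctxS (Γ : Ctx) (σ : Subst) : Ctx := Γ.map (fun p => (p.1, applyS σ p.2))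

/-- The free variables of a term. -/
def FV : Tm → List Nat
  | Tm.var x => [x]
  | Tm.const _ => []
  | Tm.app t u => FV t ++ FV u

/-- A term is ground if it has no free variables. -/
def Ground (t : Tm) : Prop := FV t = []

/-- The free variables of a list of terms. -/
def fvs (l : List Tm) : List Nat := (l.map FV).flatten

/-- `gvars headIn prems i`: the variables grounded after executing the first
`i` premises: `Γ₀` contains the (input) variables of the head's input
arguments (all occurrences are strict in this first-order setting) and
`Γᵢ = Γᵢ₋₁, Γ'ᵢ` where `Γ'ᵢ` contains the output variables of premise `i`. -/
def gvars (headIn : List Tm) (prems : List (List Tm × List Tm)) : Nat → List Nat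
  | 0 => fvs headIn
  | i + 1 => gvars headIn prems i ++ fvs (prems.getD i ([], [])).2

/-!
By induction on `i`, `σ` grounds every variable of `Γᵢ`: those of `Γ₀` because the goal's
inputs are ground, those of `Γ'ᵢ` because premise `i` returned ground outputs. Mode
consistency places the variables of each premise's inputs and of the head's outputs in some
`Γᵢ`, and a term is ground under `σ` as soon as all of its variables are.
-/

lemma ground_applyS_iff (σ : Subst) (t : Tm) :
    Ground (applyS σ t) ↔ ∀ x ∈ FV t, Ground (lookupS σ x) := by
  induction t with
  | var x => simp [applyS, FV]
  | const c => simp [applyS, FV, Ground]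
  | app a b iha ihb =>
    simp only [Ground, applyS, FV, List.append_eq_nil_iff, List.mem_append, or_imp,
      forall_and] at *
    rw [iha, ihb]

lemma forall_ground_applyS_iff (σ : Subst) (l : List Tm) :
    (∀ t ∈ l, Ground (applyS σ t)) ↔ ∀ x ∈ fvs l, Ground (lookupS σ x) := by
  simp only [ground_applyS_iff, fvs, List.mem_flatten, List.mem_map]
  grind

lemma ground_lookupS_of_mem_gvars {headIn : List Tm} {prems : List (List Tm × List Tm)}
    {σ : Subst} (hground_in : ∀ x ∈ fvs headIn, Ground (lookupS σ x))
    (hground_prem_out : ∀ i < prems.length,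
      ∀ t ∈ (prems.getD i ([], [])).2, Ground (applyS σ t)) :
    ∀ {i}, i ≤ prems.length → ∀ x ∈ gvars headIn prems i, Ground (lookupS σ x)
  | 0, _ => hground_in
  | i + 1, hi => by
    simp only [gvars, List.mem_append]
    rintro x (hx | hx)
    · exact ground_lookupS_of_mem_gvars hground_in hground_prem_out (by omega) x hx
    · exact (forall_ground_applyS_iff σ _).1 (hground_prem_out i hi) x hx

/-- a mode consistent clause (head with input arguments
`headIn` and output arguments `headOut`, premises with their input and output
argument lists) preserves groundness when executed left-to-right: if the head
is matched against a goal with ground inputs (so `σ` is ground on the input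
variables of the head) and each premise succeeds producing ground outputs,
then the input arguments of each premise and the output arguments of the head
are ground under `σ`. -/
theorem mode_consistent_groundness
    (headIn headOut : List Tm) (prems : List (List Tm × List Tm)) (σ : Subst)
    (hmc_in : ∀ i < prems.length,
      ∀ y ∈ fvs (prems.getD i ([], [])).1, y ∈ gvars headIn prems i)
    (hmc_out : ∀ y ∈ fvs headOut, y ∈ gvars headIn prems prems.length)
    (hground_in : ∀ x ∈ fvs headIn, Ground (lookupS σ x))
    (hground_prem_out : ∀ i < prems.length,
      ∀ t ∈ (prems.getD i ([], [])).2, Ground (applyS σ t)) :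
    (∀ i < prems.length,
      ∀ t ∈ (prems.getD i ([], [])).1, Ground (applyS σ t)) ∧
    (∀ t ∈ headOut, Ground (applyS σ t)) := by
  have hΓ := @ground_lookupS_of_mem_gvars headIn prems σ hground_in hground_prem_out
  exact ⟨fun i hi => (forall_ground_applyS_iff σ _).2 fun x hx => hΓ hi.le x (hmc_in i hi x hx),
    (forall_ground_applyS_iff σ _).2 fun x hx => hΓ le_rfl x (hmc_out x hx)⟩
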